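/- arXiv:math/9209207 — 4 statements merged into one kernel-verified Lean document; each statement's English description precedes it below -/
import Mathlib

section
/- For a regular cardinal κ and a cardinal θ ≥ κ, the Baire number 𝔫_κ^θ of the space (2^θ)_κ satisfies κ⁺ ≤ 𝔫_κ^θ ≤ 2^κ. -/
open Cardinal Set

universe u

/-- `ExtFn q p` : the partial function `q` extends `p`. -/
def ExtFn {θ : Type u} (q p : θ → Option Bool) : Prop :=
  ∀ x b, p x = some b → q x = some b

/-- `Fn κ θ` : partial functions `θ → 2` of size `< κ`. -/
def Fn (κ : Cardinal.{u}) (θ : Type u) : Set (θ → Option Bool) :=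
  {p | #{x | p x ≠ none} < κ}

/-- The basic open set determined by a condition `p`. -/
def cylinder {θ : Type u} (p : θ → Option Bool) : Set (θ → Bool) :=
  {f | ∀ x b, p x = some b → f x = b}

/-- The topology of the space `(2^θ)_κ`. -/
def kTop (κ : Cardinal.{u}) (θ : Type u) : TopologicalSpace (θ → Bool) :=
  TopologicalSpace.generateFrom {U | ∃ p ∈ Fn κ θ, U = cylinder p}

/-- The Baire number of the space `(2^θ)_κ` : the least cardinality of a family of
dense open sets with empty intersection. -/
noncomputable def spaceBaire (κ : Cardinal.{u}) (θ : Type u) : Cardinal.{u} :=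
  sInf {c | ∃ F : Set (Set (θ → Bool)), #F = c ∧
    (∀ U ∈ F, @IsOpen _ (kTop κ θ) U ∧ @Dense _ (kTop κ θ) U) ∧ ⋂₀ F = ∅}

/-- `𝔫_κ^θ` for cardinals `κ ≤ θ`. -/
noncomputable def nBaire (κ θ : Cardinal.{u}) : Cardinal.{u} :=
  spaceBaire κ θ.out

/-!
Since `κ` is infinite, cylinders of conditions of size `< κ` form a base of `(2^θ)_κ`, and by
regularity of `κ` the union of fewer than `κ` conditions is again a condition. Given `κ` dense
open sets, a transfinite recursion of length `κ` builds an increasing chain of conditions whose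
`i`-th member forces the generic point into the `i`-th set, gluing the previous members at every
stage; any point extending the whole chain lies in all the sets, so `κ < 𝔫_κ^θ`.
For `𝔫_κ^θ ≤ 2^κ`, fix `A ⊆ θ` of size `κ`: for each `g : A → 2` the set of points whose
restriction to `A` differs from `g` is dense open (no condition decides all of `A`), and these
`2^κ` sets have empty intersection.
-/

open Cardinal Set Topology TopologicalSpace

universe v

section Conditions

variable {T : Type u} {κ : Cardinal.{u}}

def IsDenseOpen (κ : Cardinal.{u}) (U : Set (T → Bool)) : Prop :=
  IsOpen[kTop κ T] U ∧ @Dense _ (kTop κ T) U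

def cylinders (κ : Cardinal.{u}) (T : Type u) : Set (Set (T → Bool)) :=
  {U | ∃ p ∈ Fn κ T, U = cylinder p}

theorem cylinder_subset_of_extFn {p q : T → Option Bool} (h : ExtFn q p) :
    cylinder q ⊆ cylinder p :=
  fun _ hf x b hb => hf x b (h x b hb)

theorem extFn_trans {p q r : T → Option Bool} (hqp : ExtFn q p) (hrq : ExtFn r q) :
    ExtFn r p :=
  fun x b hb => hrq x b (hqp x b hb)

theorem getD_mem_cylinder (p : T → Option Bool) : (fun x => (p x).getD false) ∈ cylinder p :=
  fun x b hb => by simp [hb]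

open Classical in
noncomputable def condOn (s : Set T) (f : T → Bool) : T → Option Bool :=
  fun x => if x ∈ s then some (f x) else none

theorem condOn_mem_Fn {s : Set T} (hs : #s < κ) (f : T → Bool) : condOn s f ∈ Fn κ T := by
  have hdom : {x | condOn s f x ≠ none} = s := by
    ext x
    by_cases hx : x ∈ s <;> simp [condOn, hx]
  simpa [Fn, hdom] using hs

theorem mem_cylinder_condOn {s : Set T} {f g : T → Bool} :
    g ∈ cylinder (condOn s f) ↔ EqOn g f s := by
  constructor
  · intro hg x hx
    exact hg x (f x) (by simp [condOn, hx])
  · intro hg x b hb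
    by_cases hx : x ∈ s
    · simp only [condOn, hx, if_true, Option.some.injEq] at hb
      rw [hg hx, hb]
    · simp [condOn, hx] at hb

theorem extFn_condOn {p : T → Option Bool} {f : T → Bool} (hf : f ∈ cylinder p) {s : Set T}
    (hs : {x | p x ≠ none} ⊆ s) : ExtFn (condOn s f) p := by
  intro x b hb
  have hx : x ∈ s := hs (by simp [hb])
  simp [condOn, hx, hf x b hb]

theorem isTopologicalBasis_cylinders (hκ : ℵ₀ ≤ κ) :
    @IsTopologicalBasis _ (kTop κ T) (cylinders κ T) := by
  refine @IsTopologicalBasis.mk _ (kTop κ T) _ ?_ ?_ rfl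
  · rintro _ ⟨p, hp, rfl⟩ _ ⟨q, hq, rfl⟩ f ⟨hfp, hfq⟩
    have hs : #({x | p x ≠ none} ∪ {x | q x ≠ none} : Set T) < κ :=
      (mk_union_le _ _).trans_lt (add_lt_of_lt hκ hp hq)
    exact ⟨_, ⟨_, condOn_mem_Fn hs f, rfl⟩, mem_cylinder_condOn.2 (eqOn_refl f _),
      subset_inter (cylinder_subset_of_extFn (extFn_condOn hfp subset_union_left))
        (cylinder_subset_of_extFn (extFn_condOn hfq subset_union_right))⟩
  · refine eq_univ_of_forall fun f => ⟨_, ⟨condOn ∅ f, condOn_mem_Fn ?_ f, rfl⟩,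
      mem_cylinder_condOn.2 (eqOn_empty _ _)⟩
    simpa using aleph0_pos.trans_le hκ

theorem exists_extFn_cylinder_subset (hκ : ℵ₀ ≤ κ) {D : Set (T → Bool)} (hD : IsDenseOpen κ D)
    {q : T → Option Bool} (hq : q ∈ Fn κ T) : ∃ p ∈ Fn κ T, ExtFn p q ∧ cylinder p ⊆ D := by
  let _ := kTop κ T
  have hb := isTopologicalBasis_cylinders (T := T) hκ
  obtain ⟨f, hfq, hfD⟩ := hD.2.inter_open_nonempty (cylinder q)
    (hb.isOpen ⟨q, hq, rfl⟩) ⟨_, getD_mem_cylinder q⟩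
  obtain ⟨_, ⟨p, hp, rfl⟩, hfp, hpD⟩ := hb.exists_subset_of_mem_open hfD hD.1
  have hs : #({x | p x ≠ none} ∪ {x | q x ≠ none} : Set T) < κ :=
    (mk_union_le _ _).trans_lt (add_lt_of_lt hκ hp hq)
  exact ⟨_, condOn_mem_Fn hs f, extFn_condOn hfq subset_union_right,
    (cylinder_subset_of_extFn (extFn_condOn hfp subset_union_left)).trans hpD⟩

end Conditions

section Chains

variable {T : Type u} {κ : Cardinal.{u}}

open Classical in
noncomputable def glue {ι : Type v} (p : ι → T → Option Bool) : T → Option Bool :=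
  fun x => if h : ∃ i, p i x ≠ none then p h.choose x else none

theorem glue_ne_none_subset {ι : Type v} (p : ι → T → Option Bool) :
    {x | glue p x ≠ none} ⊆ ⋃ i, {x | p i x ≠ none} := by
  intro x hx
  by_cases h : ∃ i, p i x ≠ none
  · exact mem_iUnion.2 h
  · simp only [glue, dif_neg h, mem_ofPred_eq, ne_eq, not_true_eq_false] at hx

theorem glue_mem_Fn (hκ : κ.IsRegular) {ι : Type u} (hι : #ι < κ) {p : ι → T → Option Bool}
    (hp : ∀ i, p i ∈ Fn κ T) : glue p ∈ Fn κ T :=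
  (mk_le_mk_of_subset (glue_ne_none_subset p)).trans_lt
    ((card_iUnion_lt_iff_forall_of_isRegular hκ hι).2 hp)

theorem extFn_glue {ι : Type v} [Preorder ι] [IsDirectedOrder ι] {p : ι → T → Option Bool}
    (hp : ∀ i j, i ≤ j → ExtFn (p j) (p i)) (i : ι) : ExtFn (glue p) (p i) := by
  intro x b hb
  have h : ∃ i, p i x ≠ none := ⟨i, by simp [hb]⟩
  obtain ⟨c, hc⟩ := Option.ne_none_iff_exists'.1 h.choose_spec
  obtain ⟨k, hik, hjk⟩ := directed_of (· ≤ ·) i h.choose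
  have hbc : some b = some c := (hp _ _ hik x b hb).symm.trans (hp _ _ hjk x c hc)
  simp only [glue, dif_pos h, hc, hbc]

noncomputable def transfiniteChain {ι : Type v} [LinearOrder ι] [WellFoundedLT ι]
    (ext : ι → (T → Option Bool) → T → Option Bool) : ι → T → Option Bool :=
  wellFounded_lt.fix fun i ih => ext i (glue fun j : Iio i => ih j j.2)

theorem transfiniteChain_eq {ι : Type v} [LinearOrder ι] [WellFoundedLT ι]
    (ext : ι → (T → Option Bool) → T → Option Bool) (i : ι) :
    transfiniteChain ext i = ext i (glue fun j : Iio i => transfiniteChain ext j) :=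
  wellFounded_lt.fix_eq _ _

theorem transfiniteChain_spec (hκ : κ.IsRegular) {ι : Type u} [LinearOrder ι] [WellFoundedLT ι]
    (hι : ∀ i : ι, #(Iio i) < κ) {ext : ι → (T → Option Bool) → T → Option Bool}
    (hext : ∀ i, ∀ q ∈ Fn κ T, ext i q ∈ Fn κ T ∧ ExtFn (ext i q) q) (i : ι) :
    transfiniteChain ext i ∈ Fn κ T ∧
      ∀ j ≤ i, ExtFn (transfiniteChain ext i) (transfiniteChain ext j) := by
  induction i using WellFoundedLT.induction with
  | _ i ih =>
    have hglue := glue_mem_Fn hκ (hι i) fun j : Iio i => (ih j j.2).1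
    have hi := transfiniteChain_eq ext i
    refine ⟨hi ▸ (hext i _ hglue).1, fun j hji => ?_⟩
    rcases hji.lt_or_eq with hji | rfl
    · have hglue_ext : ExtFn (glue fun k : Iio i => transfiniteChain ext k)
          (transfiniteChain ext j) :=
        extFn_glue (p := fun k : Iio i => transfiniteChain ext k)
          (fun k l hkl => (ih l l.2).2 k hkl) ⟨j, hji⟩
      exact extFn_trans hglue_ext (hi ▸ (hext i _ hglue).2)
    · exact fun _ _ h => h

end Chains

section Baire

variable {T : Type u} {κ : Cardinal.{u}}

theorem iInter_nonempty_of_isRegular (hκ : κ.IsRegular) {ι : Type u} [LinearOrder ι]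
    [WellFoundedLT ι] (hι : ∀ i : ι, #(Iio i) < κ) {D : ι → Set (T → Bool)}
    (hD : ∀ i, IsDenseOpen κ (D i)) : (⋂ i, D i).Nonempty := by
  choose! ext hext using fun i q (hq : q ∈ Fn κ T) =>
    exists_extFn_cylinder_subset hκ.aleph0_le (hD i) hq
  have hchain := transfiniteChain_spec hκ hι fun i q hq => ⟨(hext i q hq).1, (hext i q hq).2.1⟩
  refine ⟨fun x => (glue (transfiniteChain ext) x).getD false, mem_iInter.2 fun i => ?_⟩
  have hglue := glue_mem_Fn hκ (hι i) fun j : Iio i => (hchain j).1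
  have hchainD : cylinder (transfiniteChain ext i) ⊆ D i := by
    rw [transfiniteChain_eq]
    exact (hext i _ hglue).2.2
  exact hchainD <| cylinder_subset_of_extFn (extFn_glue (fun j k hjk => (hchain k).2 j hjk) i)
    (getD_mem_cylinder _)

theorem sInter_nonempty_of_mk_le (hκ : κ.IsRegular) {F : Set (Set (T → Bool))} (hF : #F ≤ κ)
    (hD : ∀ U ∈ F, IsDenseOpen κ U) : (⋂₀ F).Nonempty := by
  rcases F.eq_empty_or_nonempty with rfl | hne
  · simp
  have := hne.to_subtype
  obtain ⟨j⟩ : Nonempty (F ↪ κ.ord.ToType) := by rwa [← le_def, mk_ord_toType]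
  rw [sInter_eq_iInter, ← (Function.invFun_surjective j.injective).iInter_comp]
  exact iInter_nonempty_of_isRegular hκ (fun i => by simpa using mk_Iio_lt i (by simp))
    fun i => hD _ (Function.invFun j i).2

theorem isDenseOpen_restrict_ne (hκ : ℵ₀ ≤ κ) {A : Set T} (hA : κ ≤ #A) (g : A → Bool) :
    IsDenseOpen κ {f : T → Bool | A.domRestrict f ≠ g} := by
  classical
  let _ := kTop κ T
  have hb := isTopologicalBasis_cylinders (T := T) hκ
  constructor
  · refine hb.isOpen_iff.2 fun f hf => ?_
    obtain ⟨a, ha⟩ := Function.ne_iff.1 hf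
    refine ⟨_, ⟨condOn {a.1} f, condOn_mem_Fn ?_ f, rfl⟩,
      mem_cylinder_condOn.2 (eqOn_refl _ _), fun h hh => Function.ne_iff.2 ⟨a, ?_⟩⟩
    · simpa using one_lt_aleph0.trans_le hκ
    · exact ((mem_cylinder_condOn.1 hh) (mem_singleton a.1)).trans_ne ha
  · refine hb.dense_iff.2 ?_
    rintro _ ⟨p, hp, rfl⟩ -
    obtain ⟨a, haA, hpa⟩ : ∃ a ∈ A, p a = none := by
      by_contra! h
      exact (hA.trans (mk_le_mk_of_subset h)).not_gt hp
    refine ⟨Function.update (fun x => (p x).getD false) a (!g ⟨a, haA⟩), ?_, ?_⟩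
    · intro x b hb
      have hxa : x ≠ a := by rintro rfl; simp [hpa] at hb
      simp [Function.update_of_ne hxa, hb]
    · exact Function.ne_iff.2 ⟨⟨a, haA⟩, by simp⟩

theorem exists_sInter_eq_empty (hκ : ℵ₀ ≤ κ) (hT : κ ≤ #T) :
    ∃ F : Set (Set (T → Bool)), #F ≤ 2 ^ κ ∧ (∀ U ∈ F, IsDenseOpen κ U) ∧ ⋂₀ F = ∅ := by
  obtain ⟨A, hA⟩ := le_mk_iff_exists_set.1 hT
  refine ⟨range fun g : A → Bool => {f | A.domRestrict f ≠ g}, ?_, ?_, ?_⟩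
  · refine mk_range_le.trans_eq ?_
    simp [hA]
  · rintro _ ⟨g, rfl⟩
    exact isDenseOpen_restrict_ne hκ hA.ge g
  · exact eq_empty_of_forall_notMem fun f hf => hf _ ⟨A.domRestrict f, rfl⟩ rfl

theorem spaceBaire_le_two_power (hκ : ℵ₀ ≤ κ) (hT : κ ≤ #T) : spaceBaire κ T ≤ 2 ^ κ := by
  obtain ⟨F, hFκ, hF, hFe⟩ := exists_sInter_eq_empty hκ hT
  refine (csInf_le' ?_).trans hFκ
  exact ⟨F, rfl, hF, hFe⟩

theorem succ_le_spaceBaire (hκ : κ.IsRegular) (hT : κ ≤ #T) : Order.succ κ ≤ spaceBaire κ T := by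
  obtain ⟨F, -, hF, hFe⟩ := exists_sInter_eq_empty hκ.aleph0_le hT
  refine le_csInf ?_ ?_
  · exact ⟨#F, F, rfl, hF, hFe⟩
  rintro _ ⟨G, rfl, hG, hGe⟩
  refine Order.succ_le_of_lt (lt_of_not_ge fun hGκ => ?_)
  exact (sInter_nonempty_of_mk_le hκ hGκ hG).ne_empty hGe

end Baire

/-- Fact 1: `κ⁺ ≤ 𝔫_κ^θ ≤ 2^κ`. -/
theorem baire_bounds (κ θ : Cardinal.{u}) (hκ : κ.IsRegular) (hθ : κ ≤ θ) :
    Order.succ κ ≤ nBaire κ θ ∧ nBaire κ θ ≤ 2 ^ κ := by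
  have hT : κ ≤ #θ.out := by rwa [mk_out]
  exact ⟨succ_le_spaceBaire hκ hT, spaceBaire_le_two_power hκ.aleph0_le hT⟩
end

section
/- For a regular cardinal κ, the set {𝔫_κ^θ : θ ≥ κ a cardinal} of Baire numbers of the spaces (2^θ)_κ is finite. -/
/-!
Restricting functions along an embedding `θ₁ ↪ θ₂` is a continuous open map
`(2^θ₂)_κ → (2^θ₁)_κ`, so it pulls a family of dense open sets with empty intersection back to
another such family. Hence `θ ↦ 𝔫_κ^θ` is antitone on `[κ, ∞)`. An antitone map between
well-orders has finite image: an infinite image would contain a strictly increasing sequence of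
values, whose arguments would form a strictly decreasing sequence of cardinals.
-/

open Cardinal Set

universe u

open Function Topology TopologicalSpace

theorem AntitoneOn.finite_image {α β : Type*} [LinearOrder α] [WellFoundedLT α] [LinearOrder β]
    [WellFoundedLT β] {f : α → β} {s : Set α} (hf : AntitoneOn f s) : (f '' s).Finite := by
  choose g hgs hfg using fun c : f '' s => c.2
  have hg : StrictAnti g := fun c d hcd => lt_of_not_ge fun hgcd =>
    hcd.not_ge (by simpa only [hfg, Subtype.coe_le_coe] using hf (hgs c) (hgs d) hgcd)
  have := hg.wellFoundedGT
  exact finite_coe_iff.1 (Finite.of_wellFoundedLT_wellFoundedGT _)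

section Conditions

variable {κ : Cardinal.{u}} {θ : Type u}

lemma const_none_mem_Fn (hκ : 0 < κ) : (fun _ : θ => (none : Option Bool)) ∈ Fn κ θ := by
  simpa [Fn] using hκ

lemma cylinder_const_none : cylinder (fun _ : θ => (none : Option Bool)) = Set.univ := by
  ext f
  simp [cylinder]

lemma exists_eq_none_of_mem_Fn (hθ : κ ≤ #θ) {p : θ → Option Bool} (hp : p ∈ Fn κ θ) :
    ∃ x, p x = none := by
  by_contra! h
  have : {x | p x ≠ none} = Set.univ := eq_univ_of_forall h
  rw [Fn, mem_ofPred_eq, this, mk_univ] at hp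
  exact hp.not_ge hθ

lemma or_mem_Fn (hκ : ℵ₀ ≤ κ) {p q : θ → Option Bool} (hp : p ∈ Fn κ θ) (hq : q ∈ Fn κ θ) :
    (fun x => (p x).or (q x)) ∈ Fn κ θ := by
  have hsub : {x | (p x).or (q x) ≠ none} ⊆ {x | p x ≠ none} ∪ {x | q x ≠ none} := by
    intro x
    simp only [mem_ofPred_eq, ne_eq, Option.or_eq_none_iff, mem_union]
    tauto
  exact (mk_le_mk_of_subset hsub).trans_lt ((mk_union_le _ _).trans_lt (add_lt_of_lt hκ hp hq))

lemma cylinder_or_eq_inter {p q : θ → Option Bool} (h : (cylinder p ∩ cylinder q).Nonempty) :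
    cylinder (fun x => (p x).or (q x)) = cylinder p ∩ cylinder q := by
  obtain ⟨a, hap, haq⟩ := h
  ext f
  constructor
  · intro hf
    refine ⟨fun x b hb => hf x b (by simp [hb]), fun x b hb => ?_⟩
    cases hpx : p x with
    | none => exact hf x b (by simp [hpx, hb])
    | some b' => rw [hf x b' (by simp [hpx]), ← hap x b' hpx, haq x b hb]
  · rintro ⟨hfp, hfq⟩ x b hb
    cases hpx : p x with
    | none => exact hfq x b (by simpa [hpx] using hb)
    | some b' => exact hfp x b (by simpa [hpx] using hb)

lemma update_mem_cylinder [DecidableEq θ] {p : θ → Option Bool} {f : θ → Bool}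
    (hf : f ∈ cylinder p) {x : θ} (hx : p x = none) (b : Bool) : update f x b ∈ cylinder p := by
  intro y c hy
  obtain rfl | hyx := eq_or_ne y x
  · simp [hx] at hy
  · rw [update_of_ne hyx]
    exact hf y c hy

lemma update_none_mem_Fn [DecidableEq θ] (hκ : ℵ₀ ≤ κ) (x : θ) (b : Bool) :
    update (fun _ => none) x (some b) ∈ Fn κ θ := by
  have : {y | update (fun _ => none) x (some b) y ≠ none} = {x} := by
    ext y
    obtain rfl | hyx := eq_or_ne y x <;> simp [*]
  rw [Fn, mem_ofPred_eq, this, mk_singleton]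
  exact one_lt_aleph0.trans_le hκ

lemma cylinder_update_none [DecidableEq θ] (x : θ) (b : Bool) :
    cylinder (update (fun _ => none) x (some b)) = {g | g x = b} := by
  ext g
  refine ⟨fun hg => hg x b (by simp), fun hg y c hy => ?_⟩
  obtain rfl | hyx := eq_or_ne y x
  · simp_all
  · simp [hyx] at hy

end Conditions

section KTop

variable {κ : Cardinal.{u}} {θ : Type u}

lemma isTopologicalBasis_cylinders_s5 (hκ : ℵ₀ ≤ κ) :
    @IsTopologicalBasis (θ → Bool) (kTop κ θ) {U | ∃ p ∈ Fn κ θ, U = cylinder p} := by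
  let _ := kTop κ θ
  refine ⟨?_, ?_, rfl⟩
  · rintro _ ⟨p, hp, rfl⟩ _ ⟨q, hq, rfl⟩ a ha
    refine ⟨_, ⟨_, or_mem_Fn hκ hp hq, rfl⟩, ?_⟩
    rw [cylinder_or_eq_inter ⟨a, ha⟩]
    exact ⟨ha, subset_rfl⟩
  · exact sUnion_eq_univ_iff.2 fun _ =>
      ⟨_, ⟨_, const_none_mem_Fn (aleph0_pos.trans_le hκ), rfl⟩, by simp [cylinder_const_none]⟩

lemma isOpen_setOf_apply_eq_kTop (hκ : ℵ₀ ≤ κ) (x : θ) (b : Bool) :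
    IsOpen[kTop κ θ] {g | g x = b} := by
  classical
  rw [← cylinder_update_none]
  exact .basic _ ⟨_, update_none_mem_Fn hκ x b, rfl⟩

lemma isClosed_singleton_kTop (hκ : ℵ₀ ≤ κ) (f : θ → Bool) : IsClosed[kTop κ θ] {f} := by
  have hcompl : ({f}ᶜ : Set (θ → Bool)) = ⋃ x, {g | g x = !f x} := by
    ext g
    simp [funext_iff, Bool.eq_not]
  let _ := kTop κ θ
  rw [← isOpen_compl_iff, hcompl]
  exact isOpen_iUnion fun x => isOpen_setOf_apply_eq_kTop hκ x _

lemma not_isOpen_singleton_kTop (hκ : ℵ₀ ≤ κ) (hθ : κ ≤ #θ) (f : θ → Bool) :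
    ¬IsOpen[kTop κ θ] {f} := by
  classical
  let _ := kTop κ θ
  intro hf
  obtain ⟨_, ⟨p, hp, rfl⟩, hfp, hpf⟩ := (isTopologicalBasis_cylinders_s5 hκ).isOpen_iff.1 hf f rfl
  obtain ⟨x, hx⟩ := exists_eq_none_of_mem_Fn hθ hp
  simpa using congrFun (hpf (update_mem_cylinder hfp hx (!f x))) x

end KTop

section Restriction

variable {κ : Cardinal.{u}} {θ₁ θ₂ : Type u} (i : θ₁ ↪ θ₂)

lemma extend_none_mem_Fn {p : θ₁ → Option Bool} (hp : p ∈ Fn κ θ₁) :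
    extend i p (fun _ => none) ∈ Fn κ θ₂ := by
  have hsub : {y | extend i p (fun _ => none) y ≠ none} ⊆ i '' {x | p x ≠ none} := by
    intro y hy
    by_cases hyi : ∃ x, i x = y
    · obtain ⟨x, rfl⟩ := hyi
      exact ⟨x, by simpa [i.injective.extend_apply] using hy, rfl⟩
    · simp [extend_apply' _ _ _ hyi] at hy
  exact (mk_le_mk_of_subset hsub).trans_lt (mk_image_le.trans_lt hp)

lemma comp_mem_Fn {q : θ₂ → Option Bool} (hq : q ∈ Fn κ θ₂) : q ∘ i ∈ Fn κ θ₁ :=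
  (mk_preimage_of_injective i {y | q y ≠ none} i.injective).trans_lt hq

lemma preimage_comp_cylinder (p : θ₁ → Option Bool) :
    (· ∘ i) ⁻¹' cylinder p = cylinder (extend i p fun _ => none) := by
  ext f
  refine ⟨fun hf y b hb => ?_, fun hf x b hb => hf (i x) b (by rwa [i.injective.extend_apply])⟩
  by_cases hyi : ∃ x, i x = y
  · obtain ⟨x, rfl⟩ := hyi
    exact hf x b (by rwa [i.injective.extend_apply] at hb)
  · simp [extend_apply' _ _ _ hyi] at hb

lemma image_comp_cylinder (q : θ₂ → Option Bool) :
    (· ∘ i) '' cylinder q = cylinder (q ∘ i) := by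
  ext g
  refine ⟨by rintro ⟨f, hf, rfl⟩ x b hb; exact hf (i x) b hb, fun hg => ?_⟩
  refine ⟨extend i g fun y => (q y).getD false, fun y b hb => ?_, extend_comp i.injective _ _⟩
  by_cases hyi : ∃ x, i x = y
  · obtain ⟨x, rfl⟩ := hyi
    rw [i.injective.extend_apply]
    exact hg x b hb
  · simp [extend_apply' _ _ _ hyi, hb]

lemma continuous_comp_kTop : Continuous[kTop κ θ₂, kTop κ θ₁] (· ∘ i) := by
  rw [kTop, kTop, continuous_generateFrom_iff]
  rintro _ ⟨p, hp, rfl⟩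
  rw [preimage_comp_cylinder]
  exact .basic _ ⟨_, extend_none_mem_Fn i hp, rfl⟩

lemma isOpenMap_comp_kTop (hκ : ℵ₀ ≤ κ) :
    @IsOpenMap _ _ (kTop κ θ₂) (kTop κ θ₁) (· ∘ i) := by
  rw [@IsTopologicalBasis.isOpenMap_iff _ _ (kTop κ θ₂) (kTop κ θ₁) _
    (isTopologicalBasis_cylinders_s5 hκ)]
  rintro _ ⟨q, hq, rfl⟩
  rw [image_comp_cylinder]
  exact .basic _ ⟨_, comp_mem_Fn i hq, rfl⟩

end Restriction

def IsBaireWitness (κ : Cardinal.{u}) (θ : Type u) (F : Set (Set (θ → Bool))) : Prop :=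
  (∀ U ∈ F, IsOpen[kTop κ θ] U ∧ @Dense _ (kTop κ θ) U) ∧ ⋂₀ F = ∅

section BaireNumber

variable {κ : Cardinal.{u}}

lemma isBaireWitness_compl_singletons (hκ : ℵ₀ ≤ κ) {θ : Type u} (hθ : κ ≤ #θ) :
    IsBaireWitness κ θ (range fun f => {f}ᶜ) := by
  refine ⟨?_, ?_⟩
  · rintro _ ⟨f, rfl⟩
    exact ⟨(isClosed_singleton_kTop hκ f).isOpen_compl,
      @dense_compl_singleton_iff_not_open _ (kTop κ θ) f |>.2 (not_isOpen_singleton_kTop hκ hθ f)⟩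
  · exact sInter_range _ ▸ iInter_eq_empty_iff.2 fun g => ⟨g, by simp⟩

lemma spaceBaire_le_mk {θ : Type u} {F : Set (Set (θ → Bool))} (hF : IsBaireWitness κ θ F) :
    spaceBaire κ θ ≤ #F :=
  csInf_le' ⟨F, rfl, hF⟩

lemma exists_isBaireWitness_mk_eq (hκ : ℵ₀ ≤ κ) {θ : Type u} (hθ : κ ≤ #θ) :
    ∃ F, IsBaireWitness κ θ F ∧ #F = spaceBaire κ θ := by
  obtain ⟨F, hF, hwit⟩ := csInf_mem (⟨_, _, rfl, isBaireWitness_compl_singletons hκ hθ⟩ :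
    {c | ∃ F : Set (Set (θ → Bool)), #F = c ∧ IsBaireWitness κ θ F}.Nonempty)
  exact ⟨F, hwit, hF⟩

lemma IsBaireWitness.preimage_comp (hκ : ℵ₀ ≤ κ) {θ₁ θ₂ : Type u} (i : θ₁ ↪ θ₂)
    {F : Set (Set (θ₁ → Bool))} (hF : IsBaireWitness κ θ₁ F) :
    IsBaireWitness κ θ₂ ((fun U => (· ∘ i) ⁻¹' U) '' F) := by
  let _ := kTop κ θ₁
  let _ := kTop κ θ₂
  refine ⟨?_, ?_⟩
  · rintro _ ⟨U, hU, rfl⟩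
    exact ⟨(hF.1 U hU).1.preimage (continuous_comp_kTop i),
      (hF.1 U hU).2.preimage (isOpenMap_comp_kTop i hκ)⟩
  · rw [sInter_image, ← preimage_sInter, hF.2, preimage_empty]

lemma spaceBaire_le_of_embedding (hκ : ℵ₀ ≤ κ) {θ₁ θ₂ : Type u} (hθ₁ : κ ≤ #θ₁) (i : θ₁ ↪ θ₂) :
    spaceBaire κ θ₂ ≤ spaceBaire κ θ₁ := by
  obtain ⟨F, hF, hFmk⟩ := exists_isBaireWitness_mk_eq hκ hθ₁
  calc spaceBaire κ θ₂ ≤ #((fun U => (· ∘ i) ⁻¹' U) '' F) :=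
        spaceBaire_le_mk (hF.preimage_comp hκ i)
    _ ≤ #F := mk_image_le
    _ = spaceBaire κ θ₁ := hFmk

lemma nBaire_antitoneOn (hκ : ℵ₀ ≤ κ) : AntitoneOn (nBaire κ) (Ici κ) := fun _ ha _ _ hab =>
  spaceBaire_le_of_embedding hκ (by rwa [mk_out]) (out_embedding.1 hab).some

end BaireNumber

/-- Fact 3 (second part): `{𝔫_κ^θ : θ ≥ κ}` is finite. -/
theorem baire_values_finite (κ : Cardinal.{u}) (hκ : κ.IsRegular) :
    {c : Cardinal.{u} | ∃ θ : Cardinal.{u}, κ ≤ θ ∧ nBaire κ θ = c}.Finite :=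
  (nBaire_antitoneOn hκ.aleph0_le).finite_image
end

section
/- Let κ be an infinite cardinal and suppose P is a product, with supports of size ≤ κ, of partial orders each having the κ⁺-chain condition, and assume 2^κ = κ⁺. Then P has the κ⁺⁺-chain condition. -/
/-!
Colour each pair of distinct members of `A` by a coordinate at which they are incompatible: two
conditions without such a coordinate have a common extension with support `≤ κ`. A condition `p`
only sees colours in its support, a set of size `≤ κ`, and the `κ⁺`-cc of `P i` says that no
`κ⁺` members of `A` pairwise share colour `i`.

This is where the Erdős–Rado argument applies. Take `M ⊆ A` of size `2^κ` such that for every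
`B ⊆ M` of size `≤ κ`, every pattern of colours towards `B` that is realised in `A` is already
realised in `M`. If `#A > 2^κ`, pick `x ∈ A \ M` and build inside `M` a `κ⁺`-sequence in which
every term sees each earlier term `b` in the colour with which `x` sees `b`. These colours lie in
the support of `x`, so by pigeonhole `κ⁺` terms share one colour and form a clique of that colour.
Hence `#A ≤ 2^κ = κ⁺`.
-/

open Cardinal Set

universe u

/-- The ordering of the `≤κ`-support product of the partial orders `P i`:
`q ≤ p` iff `dom q ⊇ dom p` and `q` is coordinatewise below `p` on `dom p`. -/
def ProdLE {ι : Type u} {P : ι → Type u} [∀ i, Preorder (P i)]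
    (q p : ∀ i, Option (P i)) : Prop :=
  ∀ i x, p i = some x → ∃ y, q i = some y ∧ y ≤ x

section Transfinite

variable {α : Type u} {κ μ : Cardinal.{u}}

theorem Cardinal.mk_iUnion_le_of_le {ι : Type u} {f : ι → Set α} (hμ : ℵ₀ ≤ μ)
    (hι : #ι ≤ μ) (hf : ∀ i, #(f i) ≤ μ) : #(⋃ i, f i) ≤ μ :=
  (mk_iUnion_le f).trans <| (mul_le_mul' hι (ciSup_le' hf)).trans (mul_eq_self hμ).le

theorem exists_forall_lt_of_mk_lt_cof {β : Type u} [LinearOrder β] {s : Set β}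
    (hs : #s < Order.cof β) : ∃ a, ∀ b ∈ s, b < a := by
  by_contra! h
  exact hs.not_ge (Order.cof_le h)

theorem exists_seq_image_Iio {β : Type u} [LinearOrder β] [WellFoundedLT β]
    (hβ : ∀ o : β, #(Iio o) ≤ κ) (M : Set α) (Q : Set α → α → Prop)
    (hQ : ∀ B ⊆ M, #B ≤ κ → ∃ y ∈ M, Q B y) :
    ∃ f : β → α, ∀ o, f o ∈ M ∧ Q (f '' Iio o) (f o) := by
  obtain ⟨y, -⟩ := hQ ∅ (empty_subset M) (by simp)
  have : Nonempty α := ⟨y⟩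
  let f : β → α := wellFounded_lt.fix fun o f =>
    Classical.epsilon fun y => y ∈ M ∧ Q (range fun c : Iio o => f c c.2) y
  refine ⟨f, fun o => ?_⟩
  induction o using WellFoundedLT.induction with
  | _ o ih =>
    have hB : f '' Iio o ⊆ M := image_subset_iff.2 fun c hc => (ih c hc).1
    rw [show f o = _ from wellFounded_lt.fix_eq _ o, ← image_eq_range]
    exact Classical.epsilon_spec (hQ _ hB (mk_image_le.trans (hβ o)))

theorem exists_closedUnder_of_mk_le (hκ : ℵ₀ ≤ κ) (hμ : ℵ₀ ≤ μ) (hpow : μ ^ κ = μ)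
    (F : Set α → Set α) (hF : ∀ B : Set α, #B ≤ κ → #(F B) ≤ μ) :
    ∃ M : Set α, #M ≤ μ ∧ ∀ B ⊆ M, #B ≤ κ → F B ⊆ M := by
  let step (X : Set α) : Set α := X ∪ ⋃ B : {B // B ⊆ X ∧ #B ≤ κ}, F B
  have hstep (X : Set α) (hX : #X ≤ μ) : #(step X) ≤ μ := by
    refine (mk_union_le _ _).trans <| (add_le_add hX ?_).trans (add_eq_self hμ).le
    refine mk_iUnion_le_of_le hμ ?_ fun B => hF B B.2.2
    calc #{B // B ⊆ X ∧ #B ≤ κ} ≤ max #X ℵ₀ ^ κ := mk_bounded_subset_le X κ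
      _ ≤ μ ^ κ := power_le_power_right (max_le hX hμ)
      _ = μ := hpow
  have hsucc : Order.succ κ ≤ μ :=
    Order.succ_le_of_lt <| (cantor κ).trans_le <|
      hpow ▸ power_le_power_right ((natCast_lt_aleph0 (n := 2)).le.trans hμ)
  have hcard : #(Order.succ κ).ord.ToType = Order.succ κ := by rw [mk_toType, card_ord]
  have hIio (o : (Order.succ κ).ord.ToType) : #(Iio o) ≤ κ :=
    Order.lt_succ_iff.1 (by simpa using mk_Iio_lt o)
  have hsUnion (S : Set (Set α)) (hS : S ⊆ {X | #X ≤ μ}) (hSκ : #S ≤ κ) : #(⋃₀ S) ≤ μ := by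
    rw [sUnion_eq_iUnion]
    exact mk_iUnion_le_of_le hμ (hSκ.trans ((Order.le_succ κ).trans hsucc)) fun X => hS X.2
  obtain ⟨stage, hstage⟩ := exists_seq_image_Iio hIio {X | #X ≤ μ}
    (fun S X => X = step (⋃₀ S)) fun S hS hSκ => ⟨_, hstep _ (hsUnion S hS hSκ), rfl⟩
  refine ⟨⋃ o, stage o, mk_iUnion_le_of_le hμ (hcard.trans_le hsucc) fun o => (hstage o).1,
    fun B hB hBκ => ?_⟩
  choose g hg using fun b : B => mem_iUnion.1 (hB b.2)
  obtain ⟨o, ho⟩ := exists_forall_lt_of_mk_lt_cof (s := range g) <| by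
    rw [Ordinal.cof_toType, (isRegular_succ hκ).cof_ord]
    exact mk_range_le.trans_lt (hBκ.trans_lt (Order.lt_succ κ))
  have hBo : B ⊆ ⋃₀ (stage '' Iio o) := fun b hb =>
    ⟨_, mem_image_of_mem _ (ho _ (mem_range_self ⟨b, hb⟩)), hg ⟨b, hb⟩⟩
  refine subset_iUnion_of_subset o ?_
  rw [(hstage o).2]
  exact fun a ha => Or.inr (mem_iUnion.2 ⟨⟨B, hBo, hBκ⟩, ha⟩)

end Transfinite

namespace SimpleGraph

variable {α ι : Type u} (G : ι → SimpleGraph α)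

/-- One vertex realising each pattern `t` of colours towards `B` that is realised at all. -/
def realizers (B : Set α) : Set α :=
  range fun t : {t : ∀ b : B, {i | ∃ c, (G i).Adj b c} // ∃ a, ∀ b, (G (t b)).Adj a b} =>
    t.2.choose

variable {G}

theorem mk_realizers_le {κ : Cardinal.{u}} (hκ : ℵ₀ ≤ κ)
    (hcolours : ∀ a, #{i | ∃ b, (G i).Adj a b} ≤ κ) {B : Set α} (hB : #B ≤ κ) :
    #(realizers G B) ≤ 2 ^ κ :=
  calc #(realizers G B) ≤ #(∀ b : B, {i | ∃ c, (G i).Adj b c}) :=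
        mk_range_le.trans (mk_subtype_le _)
    _ ≤ prod fun _ : B => κ := by rw [mk_pi]; exact prod_le_prod _ _ fun b => hcolours b
    _ = κ ^ #B := prod_const' _ _
    _ ≤ κ ^ κ := power_le_power_left (aleph0_pos.trans_le hκ).ne' hB
    _ = 2 ^ κ := power_self_eq hκ

theorem exists_mem_realizers {B : Set α} {t : α → ι} {a : α}
    (ha : ∀ b ∈ B, (G (t b)).Adj a b) : ∃ y ∈ realizers G B, ∀ b ∈ B, (G (t b)).Adj y b :=
  let t' : {t : ∀ b : B, {i | ∃ c, (G i).Adj b c} // ∃ a, ∀ b, (G (t b)).Adj a b} :=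
    ⟨fun b => ⟨t b, a, (ha b b.2).symm⟩, a, fun b => ha b b.2⟩
  ⟨_, mem_range_self t', fun b hb => t'.2.choose_spec ⟨b, hb⟩⟩

theorem exists_endHomogeneous {κ : Cardinal.{u}} (hκ : ℵ₀ ≤ κ)
    (hcolours : ∀ a, #{i | ∃ b, (G i).Adj a b} ≤ κ) (hadj : ∀ a b, a ≠ b → ∃ i, (G i).Adj a b)
    (hα : 2 ^ κ < #α) :
    ∃ (C : Set ι) (c : (Order.succ κ).ord.ToType → C) (f : (Order.succ κ).ord.ToType → α),
      #C ≤ κ ∧ ∀ o' o, o' < o → (G (c o')).Adj (f o) (f o') := by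
  have h2κ : ℵ₀ ≤ 2 ^ κ := hκ.trans (cantor κ).le
  obtain ⟨M, hMcard, hM⟩ := exists_closedUnder_of_mk_le hκ h2κ
    (by rw [← power_mul, mul_eq_self hκ]) (realizers G) fun B hB => mk_realizers_le hκ hcolours hB
  obtain ⟨x, hx⟩ : ∃ x, x ∉ M := by
    by_contra! h
    exact (hMcard.trans_lt hα).ne (by rw [eq_univ_of_forall h, mk_univ])
  have : Nonempty ι := by
    obtain ⟨a, b, hab⟩ :=
      (one_lt_iff_nontrivial.1 ((one_le_aleph0.trans h2κ).trans_lt hα)).exists_pair_ne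
    exact ⟨(hadj a b hab).choose⟩
  choose! col hcol using fun b (hb : b ≠ x) => hadj x b hb.symm
  obtain ⟨f, hf⟩ := exists_seq_image_Iio (β := (Order.succ κ).ord.ToType)
    (fun o => Order.lt_succ_iff.1 (by simpa using mk_Iio_lt o)) M
    (fun B y => ∀ b ∈ B, (G (col b)).Adj y b) fun B hBM hBκ => by
      obtain ⟨y, hy, hyB⟩ :=
        exists_mem_realizers fun b hb => hcol b (ne_of_mem_of_not_mem (hBM hb) hx)
      exact ⟨y, hM B hBM hBκ hy, hyB⟩
  refine ⟨{i | ∃ b, (G i).Adj x b}, fun o => ⟨col (f o), f o, ?_⟩, f, hcolours x,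
    fun o' o h => (hf o).2 _ (mem_image_of_mem f h)⟩
  exact hcol _ (ne_of_mem_of_not_mem (hf o).1 hx)

theorem mk_le_two_power_of_forall_adj {κ : Cardinal.{u}} (hκ : ℵ₀ ≤ κ)
    (hcolours : ∀ a, #{i | ∃ b, (G i).Adj a b} ≤ κ)
    (hclique : ∀ i s, (G i).IsClique s → #s ≤ κ)
    (hadj : ∀ a b, a ≠ b → ∃ i, (G i).Adj a b) : #α ≤ 2 ^ κ := by
  by_contra! hα
  obtain ⟨C, c, f, hC, hf⟩ := exists_endHomogeneous hκ hcolours hadj hα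
  obtain ⟨i, hi⟩ := infinite_pigeonhole_card c (Order.succ κ)
    (by rw [mk_toType, card_ord]) (hκ.trans (Order.le_succ κ))
    (by rw [(isRegular_succ hκ).cof_ord]; exact hC.trans_lt (Order.lt_succ κ))
  have hinj : Function.Injective f := .of_lt_imp_ne fun o' o h => (hf o' o h).ne.symm
  have hclique_i : (G i).IsClique (f '' (c ⁻¹' {i})) := by
    rintro _ ⟨o, rfl : c o = i, rfl⟩ _ ⟨o', ho' : c o' = c o, rfl⟩ hne
    rcases lt_or_gt_of_ne (hinj.ne_iff.1 hne) with h | h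
    · exact (hf o o' h).symm
    · rw [← ho']
      exact hf o' o h
  exact (Order.lt_succ κ).not_ge <| hi.trans <| (mk_image_eq hinj).ge.trans (hclique i _ hclique_i)

end SimpleGraph

theorem exists_option_lower_bound {β : Type*} [Preorder β] {x y : Option β}
    (h : ¬∃ u v, x = some u ∧ y = some v ∧ ¬∃ c, c ≤ u ∧ c ≤ v) :
    ∃ z : Option β, (x = none → y = none → z = none) ∧
      (∀ u, x = some u → ∃ c, z = some c ∧ c ≤ u) ∧ (∀ v, y = some v → ∃ c, z = some c ∧ c ≤ v) :=
  match x, y with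
  | none, none => ⟨none, by simp⟩
  | some u, none => ⟨some u, by simp⟩
  | none, some v => ⟨some v, by simp⟩
  | some u, some v => by
    obtain ⟨c, hcu, hcv⟩ : ∃ c, c ≤ u ∧ c ≤ v := by
      by_contra hc
      exact h ⟨u, v, rfl, rfl, hc⟩
    exact ⟨some c, by simp [hcu, hcv]⟩

section Product

variable {ι : Type u} {P : ι → Type u} [∀ i, Preorder (P i)]

def incompatibleAt (i : ι) : SimpleGraph (∀ i, Option (P i)) where
  Adj p q := ∃ u v, p i = some u ∧ q i = some v ∧ ¬∃ c, c ≤ u ∧ c ≤ v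
  symm := ⟨fun _ _ ⟨u, v, hu, hv, h⟩ => ⟨v, u, hv, hu, fun ⟨c, hcv, hcu⟩ => h ⟨c, hcu, hcv⟩⟩⟩
  loopless := ⟨fun _ ⟨u, v, hu, hv, h⟩ => by
    obtain rfl : u = v := Option.some_injective _ (hu.symm.trans hv)
    exact h ⟨u, le_rfl, le_rfl⟩⟩

theorem incompatibleAt_adj_apply_ne_none {i : ι} {p q : ∀ i, Option (P i)}
    (h : (incompatibleAt i).Adj p q) : p i ≠ none := by
  obtain ⟨u, -, hu, -⟩ := h
  simp [hu]

theorem mk_le_of_isClique_incompatibleAt {κ : Cardinal.{u}} (hκ : ℵ₀ ≤ κ) {i : ι}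
    (hcc : ∀ B : Set (P i), (∀ a ∈ B, ∀ b ∈ B, a ≠ b → ¬∃ c, c ≤ a ∧ c ≤ b) → #B ≤ κ)
    {s : Set (∀ i, Option (P i))} (hs : (incompatibleAt i).IsClique s) : #s ≤ κ := by
  set X : Set (P i) := {u | ∃ p ∈ s, p i = some u}
  have hX : #X ≤ κ := by
    refine hcc X ?_
    rintro u ⟨p, hp, hpu⟩ v ⟨q, hq, hqv⟩ huv
    obtain ⟨u', v', hu', hv', h⟩ := hs hp hq (by rintro rfl; exact huv (by simp_all))
    simp_all
  have hinj : InjOn (fun p => p i) s := by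
    intro p hp q hq hpq
    by_contra hne
    obtain ⟨u, v, hu, hv, h⟩ := hs hp hq hne
    exact h ⟨u, le_rfl, by simp_all⟩
  have hsub : (fun p => p i) '' s ⊆ insert none (some '' X) := by
    rintro _ ⟨p, hp, rfl⟩
    show p i ∈ _
    rcases hpi : p i with _ | u
    · exact mem_insert _ _
    · exact mem_insert_of_mem _ ⟨u, ⟨p, hp, hpi⟩, rfl⟩
  calc #s = #((fun p => p i) '' s) := (mk_image_eq_of_injOn _ _ hinj).symm
    _ ≤ #(some '' X) + 1 := (mk_le_mk_of_subset hsub).trans mk_insert_le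
    _ ≤ κ + 1 := by grw [mk_image_le, hX]
    _ = κ := add_one_eq hκ

theorem exists_prodLE_of_forall_not_adj {κ : Cardinal.{u}} (hκ : ℵ₀ ≤ κ)
    {p q : ∀ i, Option (P i)} (hp : #{i | p i ≠ none} ≤ κ) (hq : #{i | q i ≠ none} ≤ κ)
    (h : ∀ i, ¬(incompatibleAt i).Adj p q) :
    ∃ r : ∀ i, Option (P i), #{i | r i ≠ none} ≤ κ ∧ ProdLE r p ∧ ProdLE r q := by
  choose r hr₀ hrp hrq using fun i => exists_option_lower_bound (h i)
  have hsupp : {i | r i ≠ none} ⊆ {i | p i ≠ none} ∪ {i | q i ≠ none} := by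
    intro i hi
    by_contra hpq
    obtain ⟨hpi, hqi⟩ := not_or.1 hpq
    exact hi (hr₀ i (not_not.1 hpi) (not_not.1 hqi))
  refine ⟨r, ?_, hrp, hrq⟩
  exact (mk_le_mk_of_subset hsupp).trans <|
    (mk_union_le _ _).trans <| (add_le_add hp hq).trans (add_eq_self hκ).le

end Product

/-- A product, with supports of size `≤ κ`, of `κ⁺`-cc partial orders is `κ⁺⁺`-cc,
provided `2^κ = κ⁺`: every antichain has cardinality at most `κ⁺`. -/
theorem prod_chain_condition (κ : Cardinal.{u}) (hκ : ℵ₀ ≤ κ)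
    (hCH : (2 : Cardinal.{u}) ^ κ = Order.succ κ)
    (ι : Type u) (P : ι → Type u) [∀ i, Preorder (P i)]
    (hcc : ∀ i, ∀ B : Set (P i),
      (∀ a ∈ B, ∀ b ∈ B, a ≠ b → ¬ ∃ c, c ≤ a ∧ c ≤ b) → #B ≤ κ)
    (A : Set (∀ i, Option (P i)))
    (hsupp : ∀ q ∈ A, #{i | q i ≠ none} ≤ κ)
    (hanti : ∀ p ∈ A, ∀ q ∈ A, p ≠ q →
      ¬ ∃ r : ∀ i, Option (P i), #{i | r i ≠ none} ≤ κ ∧ ProdLE r p ∧ ProdLE r q) :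
    #A ≤ Order.succ κ := by
  let G (i : ι) : SimpleGraph A := (incompatibleAt i).induce A
  have hcolours (p : A) : #{i | ∃ q, (G i).Adj p q} ≤ κ := by
    refine (mk_le_mk_of_subset ?_).trans (hsupp p p.2)
    rintro i ⟨q, hpq⟩
    exact incompatibleAt_adj_apply_ne_none hpq
  have hclique (i : ι) (s : Set A) (hs : (G i).IsClique s) : #s ≤ κ :=
    (mk_image_eq Subtype.val_injective).ge.trans
      (mk_le_of_isClique_incompatibleAt hκ (hcc i) (SimpleGraph.isClique_induce_iff.1 hs))
  have hadj (p q : A) (hpq : p ≠ q) : ∃ i, (G i).Adj p q := by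
    by_contra! h
    exact hanti p p.2 q q.2 (Subtype.coe_ne_coe.2 hpq)
      (exists_prodLE_of_forall_not_adj hκ (hsupp p p.2) (hsupp q q.2) h)
  exact hCH ▸ SimpleGraph.mk_le_two_power_of_forall_adj hκ hcolours hclique hadj
end

section
/- Let λ ≥ ω and θ > ω be cardinals, and in the countable-support product Q = Q_ω(θ,λ) of copies of Fn_ω(θ,2), fix p ∈ Q with dom(p) ⊇ ω and a countable set A ⊆ θ. Then there exists q ≤ p such that for every α in A with the property that α ∉ dom(p(n)) for some n ∈ ω, there is n ∈ ω with q(n)(α) = 0; i.e., q forces that the set σ = {α : ∀n, g_n(α) = 1} meets A in a finite set, where g_n are the generic functions. -/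
open Cardinal Set

universe u

/-- `QSetOmega θ lam` : the countable-support product `Q_ω(θ,λ)` of `λ` copies of
`Fn_ω(θ,2)` (finite partial functions `θ → 2`). -/
def QSetOmega (θ lam : Type u) : Set (lam → Option (θ → Option Bool)) :=
  {q | {i | q i ≠ none}.Countable ∧ ∀ i f, q i = some f → {x | f x ≠ none}.Finite}

/-- The ordering of `Q_ω(θ,λ)`. -/
def QLE {θ lam : Type u} (q p : lam → Option (θ → Option Bool)) : Prop :=
  ∀ i f, p i = some f → ∃ g, q i = some g ∧ ExtFn g f

/-- The value of the condition `q` at coordinate `i` and point `x`. -/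
def readQ {θ lam : Type u} (q : lam → Option (θ → Option Bool)) (i : lam) (x : θ) :
    Option Bool :=
  (q i).bind fun f => f x

open Classical in
/-- Least `k` with `f k = α` (junk value `0` if none). -/
noncomputable def auxKK {θ : Type u} (f : ℕ → θ) (α : θ) : ℕ :=
  if h : ∃ k, f k = α then Nat.find h else 0

open Classical in
/-- The coordinate assigned to `α`: a coordinate where `fn _ α = none`, chosen so that
fibers are finite. -/
noncomputable def auxN {θ : Type u} (fn : ℕ → θ → Option Bool) (f : ℕ → θ) (α : θ) : ℕ :=
  if h : ∃ n, fn n α = none ∧ fn (n + 1) α ≠ none then Nat.find h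
  else if h2 : ∃ n, auxKK f α ≤ n ∧ fn n α = none then Nat.find h2 else 0

lemma aux_h2 {θ : Type u} (fn : ℕ → θ → Option Bool) (f : ℕ → θ) (α : θ)
    (hα : ∃ m, fn m α = none) (h : ¬ ∃ n, fn n α = none ∧ fn (n + 1) α ≠ none) :
    ∃ n, auxKK f α ≤ n ∧ fn n α = none := by
  obtain ⟨m, hm⟩ := hα
  have step : ∀ n, fn n α = none → fn (n + 1) α = none := by
    intro n hn
    by_contra hcon
    exact h ⟨n, hn, hcon⟩
  have hall : ∀ d, fn (m + d) α = none := by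
    intro d
    induction d with
    | zero => exact hm
    | succ d ih => exact step _ ih
  exact ⟨m + auxKK f α, Nat.le_add_left _ _, hall _⟩

lemma auxN_none {θ : Type u} (fn : ℕ → θ → Option Bool) (f : ℕ → θ) (α : θ)
    (hα : ∃ m, fn m α = none) : fn (auxN fn f α) α = none := by
  classical
  by_cases h : ∃ n, fn n α = none ∧ fn (n + 1) α ≠ none
  · rw [auxN, dif_pos h]
    exact (Nat.find_spec h).1
  · have h2 := aux_h2 fn f α hα h
    rw [auxN, dif_neg h, dif_pos h2]
    exact (Nat.find_spec h2).2

lemma auxN_fiber {θ : Type u} (fn : ℕ → θ → Option Bool) (f : ℕ → θ) (n : ℕ) :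
    {α | (∃ k, f k = α) ∧ (∃ m, fn m α = none) ∧ auxN fn f α = n} ⊆
      {α | fn (n + 1) α ≠ none} ∪ f '' Set.Iic n := by
  classical
  rintro α ⟨hrange, hα, hN⟩
  by_cases h : ∃ m, fn m α = none ∧ fn (m + 1) α ≠ none
  · left
    rw [auxN, dif_pos h] at hN
    rw [← hN]
    exact (Nat.find_spec h).2
  · right
    have h2 := aux_h2 fn f α hα h
    rw [auxN, dif_neg h, dif_pos h2] at hN
    have hle : auxKK f α ≤ n := hN ▸ (Nat.find_spec h2).1
    have hfk : f (auxKK f α) = α := by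
      rw [auxKK, dif_pos hrange]
      exact Nat.find_spec hrange
    exact ⟨auxKK f α, hle, hfk⟩

/-- Given `p ∈ Q_ω(θ,λ)` defined on the coordinates `e n` (`n ∈ ω`) and a countable
`A ⊆ θ`, there is `q ≤ p` such that every `α ∈ A* = {α ∈ A : ∃ n, α ∉ dom (p (e n))}`
gets value `0` at some coordinate `e n`; hence `q` forces
`σ = {α : ∀ n, g_n α = 1}` to meet `A` in a finite set. -/
theorem force_sigma_meets_A_finitely (θ lam : Type u) (hθ : ℵ₀ < #θ) (e : ℕ ↪ lam)
    (p : lam → Option (θ → Option Bool)) (hp : p ∈ QSetOmega θ lam)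
    (hpe : ∀ n : ℕ, p (e n) ≠ none)
    (A : Set θ) (hA : A.Countable) :
    ∃ q ∈ QSetOmega θ lam, QLE q p ∧
      ∀ α ∈ A, (∃ n : ℕ, readQ p (e n) α = none) →
        ∃ n : ℕ, readQ q (e n) α = some false := by
  classical
  obtain ⟨hc, hfin⟩ := hp
  choose fn hfn using fun n => Option.ne_none_iff_exists.mp (hpe n)
  -- hfn : ∀ n, some (fn n) = p (e n)
  have hread : ∀ n α, readQ p (e n) α = fn n α := by
    intro n α
    rw [readQ, ← hfn n]
    rfl
  by_cases hne : ∃ α, α ∈ A ∧ ∃ n, fn n α = none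
  swap
  · -- A* is empty : take q = p
    refine ⟨p, ⟨hc, hfin⟩, fun i F hF => ⟨F, hF, fun x b h => h⟩, ?_⟩
    intro α hαA ⟨n, hn⟩
    rw [hread] at hn
    exact absurd ⟨α, hαA, n, hn⟩ hne
  -- A* nonempty : enumerate it
  have hcount : {α | α ∈ A ∧ ∃ n, fn n α = none}.Countable :=
    hA.mono fun x hx => hx.1
  obtain ⟨f, hfeq⟩ := hcount.exists_eq_range hne
  have hf : ∀ α, α ∈ A → (∃ n, fn n α = none) → ∃ k, f k = α := by
    intro α h1 h2
    have : α ∈ Set.range f := hfeq ▸ ⟨h1, h2⟩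
    exact this
  set N : θ → ℕ := auxN fn f with hN
  -- the new condition
  set gfun : ℕ → θ → Option Bool := fun n x =>
    if (x ∈ A ∧ ∃ m, fn m x = none) ∧ N x = n then some false else fn n x with hgfun
  set q : lam → Option (θ → Option Bool) := fun i =>
    if h : ∃ n, e n = i then some (gfun (Nat.find h)) else p i with hqdef
  have hq : ∀ n, q (e n) = some (gfun n) := by
    intro n
    have h : ∃ m, e m = e n := ⟨n, rfl⟩
    have hfind : Nat.find h = n := e.injective (Nat.find_spec h)
    rw [hqdef]
    simp only [dif_pos h, hfind]
  have hqo : ∀ i, (¬ ∃ n, e n = i) → q i = p i := by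
    intro i h
    rw [hqdef]
    simp only [dif_neg h]
  -- key fact : if α ∈ A*, then fn (N α) α = none
  have hNnone : ∀ α, (∃ m, fn m α = none) → fn (N α) α = none :=
    fun α hα => auxN_none fn f α hα
  -- fiber finiteness
  have hNfin : ∀ n, {x | (x ∈ A ∧ ∃ m, fn m x = none) ∧ N x = n}.Finite := by
    intro n
    have hsub : {x | (x ∈ A ∧ ∃ m, fn m x = none) ∧ N x = n} ⊆
        {α | fn (n + 1) α ≠ none} ∪ f '' Set.Iic n := by
      rintro x ⟨⟨hxA, hxm⟩, hxN⟩
      exact auxN_fiber fn f n ⟨hf x hxA hxm, hxm, hxN⟩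
    exact ((hfin (e (n + 1)) (fn (n + 1)) (hfn (n + 1)).symm).union
      ((Set.finite_Iic n).image f)).subset hsub
  refine ⟨q, ⟨?_, ?_⟩, ?_, ?_⟩
  · -- countable support
    have hsub : {i | q i ≠ none} ⊆ {i | p i ≠ none} ∪ Set.range e := by
      intro i hi
      by_cases h : ∃ n, e n = i
      · obtain ⟨n, rfl⟩ := h
        exact Or.inr ⟨n, rfl⟩
      · rw [Set.mem_setOf_eq, hqo i h] at hi
        exact Or.inl hi
    exact (hc.union (Set.countable_range e)).mono hsub
  · -- each coordinate has finite domain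
    intro i g hg
    by_cases h : ∃ n, e n = i
    · obtain ⟨n, rfl⟩ := h
      rw [hq n] at hg
      have hg' : g = gfun n := (Option.some.inj hg).symm
      subst hg'
      have hsub : {x | gfun n x ≠ none} ⊆
          {x | (x ∈ A ∧ ∃ m, fn m x = none) ∧ N x = n} ∪ {x | fn n x ≠ none} := by
        intro x hx
        by_cases hcond : (x ∈ A ∧ ∃ m, fn m x = none) ∧ N x = n
        · exact Or.inl hcond
        · refine Or.inr ?_
          have hx' : (if (x ∈ A ∧ ∃ m, fn m x = none) ∧ N x = n then some false
              else fn n x) ≠ none := hx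
          rw [if_neg hcond] at hx'
          exact hx'
      exact ((hNfin n).union (hfin (e n) (fn n) (hfn n).symm)).subset hsub
    · rw [hqo i h] at hg
      exact hfin i g hg
  · -- q ≤ p
    intro i F hF
    by_cases h : ∃ n, e n = i
    · obtain ⟨n, rfl⟩ := h
      have hFfn : F = fn n := by
        have := (hfn n).trans hF
        exact (Option.some.inj this).symm
      subst hFfn
      refine ⟨gfun n, hq n, ?_⟩
      intro x b hxb
      have hcond : ¬ ((x ∈ A ∧ ∃ m, fn m x = none) ∧ N x = n) := by
        rintro ⟨⟨hxA, hxm⟩, hxN⟩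
        have := hNnone x hxm
        rw [hxN, hxb] at this
        exact Option.some_ne_none b this
      show (if (x ∈ A ∧ ∃ m, fn m x = none) ∧ N x = n then some false
          else fn n x) = some b
      rw [if_neg hcond]
      exact hxb
    · exact ⟨F, by rw [hqo i h]; exact hF, fun x b hb => hb⟩
  · -- every α ∈ A* gets value false somewhere
    intro α hαA hex
    obtain ⟨n, hn⟩ := hex
    rw [hread] at hn
    have hαstar : α ∈ A ∧ ∃ m, fn m α = none := ⟨hαA, n, hn⟩
    refine ⟨N α, ?_⟩
    rw [readQ, hq (N α)]
    show (if (α ∈ A ∧ ∃ m, fn m α = none) ∧ N α = N α then some false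
        else fn (N α) α) = some false
    rw [if_pos (And.intro hαstar rfl)]
end
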